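/- Let E ⊂ S be closed satisfying condition (h) of the equivalence theorem: there is a₀ > 1 such that for every a < a₀ there is C with ∫_{B(x,R)} d(z,E)^{-a} dV(z) ≤ C R^{n+1-a} for all x ∈ S, R > 0 (equivalently Υ(E) ≤ s := n+1-a₀ < n). Let a > s - n - 1, b < n and a - b + n + 1 > 0. Then the integral ∫_{B^n} d(z,E)^a d(ζ,z)^{-b} dV(z) is bounded by a constant independent of ζ ∈ E. -/

import Mathlib

/-!
Split the ball into the dyadic shells `2⁻ᵏ < d(ζ,z) ≤ 2·2⁻ᵏ` around `ζ ∈ E`. On the `k`-th shell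
`d(ζ,z)^{-b} ≤ 2^{|b|} 2^{kb}`, and the shell lies in `{d(ζ,·) < 4·2⁻ᵏ}`, on which
`∫ d(·,E)^a ≲ (2⁻ᵏ)^γ`: for `a < 0` with `γ = n+1+a` by condition (h), for `a ≥ 0` with `γ = n+a`
because `d(z,E) ≤ d(ζ,z)` and `{d(ζ,·) < R}` lies in a Euclidean ball of radius `√(2R)`.
As `γ > b`, the shells contribute a convergent geometric series.

When `d(·,E)^a` is not integrable on the ball, condition (h) only bounds junk values `0` of
Bochner integrals. Then `d(·,E)^a` fails to be integrable near some point `w` of the closed ball,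
hence so does the integrand for every `ζ ≠ w`, since `d(ζ,·)^{-b}` is bounded below near `w`;
its Bochner integral is then `0` as well.
-/

open MeasureTheory

noncomputable def dNI {n : ℕ} (x y : EuclideanSpace ℂ (Fin n)) : ℝ :=
  ‖1 - (inner ℂ y x : ℂ)‖

noncomputable def dE {n : ℕ} (E : Set (EuclideanSpace ℂ (Fin n)))
    (z : EuclideanSpace ℂ (Fin n)) : ℝ :=
  sInf (dNI z '' E)

open Filter Topology Metric Set
open scoped ENNReal

variable {n : ℕ}

section Geometry

lemma dNI_nonneg (x y : EuclideanSpace ℂ (Fin n)) : 0 ≤ dNI x y :=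
  norm_nonneg _

lemma dNI_comm (x y : EuclideanSpace ℂ (Fin n)) : dNI x y = dNI y x := by
  rw [dNI, dNI, ← inner_conj_symm x y, ← Complex.norm_conj (1 - _), map_sub, map_one]

lemma continuous_dNI (ζ : EuclideanSpace ℂ (Fin n)) : Continuous (dNI ζ) :=
  continuous_norm.comp (continuous_const.sub (continuous_id.inner continuous_const))

lemma dNI_le_one_add_norm {ζ : EuclideanSpace ℂ (Fin n)} (hζ : ‖ζ‖ ≤ 1)
    (z : EuclideanSpace ℂ (Fin n)) : dNI ζ z ≤ 1 + ‖z‖ :=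
  calc dNI ζ z ≤ ‖(1 : ℂ)‖ + ‖(inner ℂ z ζ : ℂ)‖ := norm_sub_le _ _
    _ ≤ 1 + ‖z‖ * ‖ζ‖ := by rw [norm_one]; gcongr; exact norm_inner_le_norm z ζ
    _ ≤ 1 + ‖z‖ := by nlinarith [norm_nonneg z]

lemma dNI_le_dNI_add_dist {x : EuclideanSpace ℂ (Fin n)} (hx : ‖x‖ ≤ 1)
    (u v : EuclideanSpace ℂ (Fin n)) : dNI u x ≤ dNI v x + dist u v :=
  calc dNI u x ≤ dNI v x + ‖(inner ℂ x v : ℂ) - inner ℂ x u‖ :=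
        norm_sub_le_norm_sub_add_norm_sub _ _ _
    _ ≤ dNI v x + ‖x‖ * ‖v - u‖ := by
        rw [← inner_sub_right]; gcongr; exact norm_inner_le_norm x _
    _ ≤ dNI v x + dist u v := by rw [dist_comm, dist_eq_norm]; nlinarith [norm_nonneg (v - u)]

lemma norm_sub_sq_le_two_mul_dNI {ζ z : EuclideanSpace ℂ (Fin n)} (hζ : ‖ζ‖ = 1) (hz : ‖z‖ ≤ 1) :
    ‖z - ζ‖ ^ 2 ≤ 2 * dNI ζ z := by
  have hre : 1 - (inner ℂ z ζ : ℂ).re ≤ dNI ζ z := by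
    simpa [dNI] using Complex.re_le_norm (1 - (inner ℂ z ζ : ℂ))
  rw [@norm_sub_sq ℂ, hζ]
  simp only [RCLike.re_to_complex]
  nlinarith [norm_nonneg z]

lemma dNI_pos {ζ z : EuclideanSpace ℂ (Fin n)} (hζ : ‖ζ‖ = 1) (hz : ‖z‖ ≤ 1) (hne : z ≠ ζ) :
    0 < dNI ζ z := by
  have := norm_sub_sq_le_two_mul_dNI hζ hz
  have : 0 < ‖z - ζ‖ := norm_pos_iff.2 (sub_ne_zero.2 hne)
  nlinarith

lemma dE_nonneg (E : Set (EuclideanSpace ℂ (Fin n))) (z : EuclideanSpace ℂ (Fin n)) :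
    0 ≤ dE E z :=
  Real.sInf_nonneg (by rintro t ⟨x, -, rfl⟩; exact dNI_nonneg _ _)

lemma dE_le_dNI {E : Set (EuclideanSpace ℂ (Fin n))} {x : EuclideanSpace ℂ (Fin n)} (hx : x ∈ E)
    (z : EuclideanSpace ℂ (Fin n)) : dE E z ≤ dNI x z := by
  rw [dNI_comm]
  exact csInf_le ⟨0, by rintro t ⟨y, -, rfl⟩; exact dNI_nonneg _ _⟩ ⟨x, hx, rfl⟩

lemma lipschitzWith_dE {E : Set (EuclideanSpace ℂ (Fin n))} (hE : E ⊆ closedBall 0 1)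
    (hEne : E.Nonempty) : LipschitzWith 1 (dE E) := by
  refine LipschitzWith.of_le_add fun u v => sub_le_iff_le_add.1 <| le_csInf (hEne.image _) ?_
  rintro t ⟨x, hx, rfl⟩
  have := dNI_le_dNI_add_dist (mem_closedBall_zero_iff.1 (hE hx)) u v
  linarith [dE_le_dNI hx u, dNI_comm x u]

end Geometry

section Shells

/-- The paper's `B(ζ, R) ∩ Bⁿ`. -/
def dNIBall (ζ : EuclideanSpace ℂ (Fin n)) (R : ℝ) : Set (EuclideanSpace ℂ (Fin n)) :=
  {z | ‖z‖ < 1 ∧ dNI ζ z < R}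

def dyadicShell (ζ : EuclideanSpace ℂ (Fin n)) (k : ℕ) : Set (EuclideanSpace ℂ (Fin n)) :=
  {z | ‖z‖ < 1 ∧ dNI ζ z ∈ Ioc ((2 : ℝ)⁻¹ ^ k) (2 * (2 : ℝ)⁻¹ ^ k)}

lemma dyadicShell_subset_dNIBall (ζ : EuclideanSpace ℂ (Fin n)) (k : ℕ) :
    dyadicShell ζ k ⊆ dNIBall ζ (4 * (2 : ℝ)⁻¹ ^ k) := fun _ ⟨hz, _, hle⟩ =>
  ⟨hz, by linarith [pow_pos (by norm_num : (0 : ℝ) < 2⁻¹) k]⟩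

lemma ball_subset_iUnion_dyadicShell {ζ : EuclideanSpace ℂ (Fin n)} (hζ : ‖ζ‖ = 1) :
    ball (0 : EuclideanSpace ℂ (Fin n)) 1 ⊆ ⋃ k, dyadicShell ζ k := by
  intro z hz
  rw [mem_ball_zero_iff] at hz
  have hpos : 0 < dNI ζ z := dNI_pos hζ hz.le fun h => by simp [h, hζ] at hz
  have hle : dNI ζ z ≤ 2 := by linarith [dNI_le_one_add_norm hζ.le z]
  obtain ⟨k, hk⟩ := exists_nat_pow_near_of_lt_one (half_pos hpos) (by linarith)
    (by norm_num : (0 : ℝ) < 2⁻¹) (by norm_num)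
  have hlow := hk.1
  rw [pow_succ] at hlow
  exact mem_iUnion.2 ⟨k, hz, by linarith, by linarith [hk.2]⟩

lemma rpow_neg_le_of_mem_Ioc {x t : ℝ} (b : ℝ) (hx : 0 < x) (ht : t ∈ Ioc x (2 * x)) :
    t ^ (-b) ≤ 2 ^ |b| * x ^ (-b) := by
  have hq : 1 ≤ t / x := (one_le_div hx).2 ht.1.le
  calc t ^ (-b) = (t / x) ^ (-b) * x ^ (-b) := by
        rw [← Real.mul_rpow (by positivity) hx.le, div_mul_cancel₀ _ hx.ne']
    _ ≤ (t / x) ^ |b| * x ^ (-b) := by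
        gcongr; exact neg_le_abs b
    _ ≤ 2 ^ |b| * x ^ (-b) := by
        gcongr; exact (div_le_iff₀ hx).2 (by linarith [ht.2])

lemma dNIBall_subset_closedBall {ζ : EuclideanSpace ℂ (Fin n)} (hζ : ‖ζ‖ = 1) {R : ℝ}
    (hR : 0 ≤ R) : dNIBall ζ R ⊆ closedBall ζ (√(2 * R)) := fun z ⟨hz, hzR⟩ => by
  rw [mem_closedBall, dist_eq_norm, Real.le_sqrt (norm_nonneg _) (by positivity)]
  linarith [norm_sub_sq_le_two_mul_dNI hζ hz.le]

variable [MeasurableSpace (EuclideanSpace ℂ (Fin n))] (V : Measure (EuclideanSpace ℂ (Fin n)))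

lemma lintegral_ball_le_of_dyadicShell {ζ : EuclideanSpace ℂ (Fin n)} (hζ : ‖ζ‖ = 1)
    (F : EuclideanSpace ℂ (Fin n) → ℝ≥0∞) {D ρ : ℝ} (hD : 0 ≤ D) (hρ₀ : 0 ≤ ρ) (hρ₁ : ρ < 1)
    (hF : ∀ k, ∫⁻ z in dyadicShell ζ k, F z ∂V ≤ ENNReal.ofReal (D * ρ ^ k)) :
    ∫⁻ z in ball 0 1, F z ∂V ≤ ENNReal.ofReal (D * (1 - ρ)⁻¹) :=
  calc ∫⁻ z in ball 0 1, F z ∂V ≤ ∫⁻ z in ⋃ k, dyadicShell ζ k, F z ∂V :=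
        lintegral_mono_set (ball_subset_iUnion_dyadicShell hζ)
    _ ≤ ∑' k, ∫⁻ z in dyadicShell ζ k, F z ∂V := lintegral_iUnion_le _ _
    _ ≤ ∑' k, ENNReal.ofReal (D * ρ ^ k) := ENNReal.tsum_le_tsum hF
    _ = ENNReal.ofReal (D * (1 - ρ)⁻¹) := by
        rw [← ENNReal.ofReal_tsum_of_nonneg (fun k => by positivity)
          ((summable_geometric_of_lt_one hρ₀ hρ₁).mul_left D), tsum_mul_left,
          tsum_geometric_of_lt_one hρ₀ hρ₁]

lemma lintegral_mul_dNI_rpow_le {ζ : EuclideanSpace ℂ (Fin n)} (hζ : ‖ζ‖ = 1)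
    {g : EuclideanSpace ℂ (Fin n) → ℝ} (hg : Measurable g) (hg₀ : ∀ z, 0 ≤ g z)
    {C γ b : ℝ} (hC : 0 ≤ C) (hbγ : b < γ)
    (hW : ∀ R > 0, ∫⁻ z in dNIBall ζ R, ENNReal.ofReal (g z) ∂V ≤ ENNReal.ofReal (C * R ^ γ)) :
    ∫⁻ z in ball 0 1, ENNReal.ofReal (g z * dNI ζ z ^ (-b)) ∂V ≤
      ENNReal.ofReal (2 ^ |b| * C * 4 ^ γ * (1 - (2 : ℝ)⁻¹ ^ (γ - b))⁻¹) := by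
  refine lintegral_ball_le_of_dyadicShell V hζ _ (by positivity) (by positivity)
    (Real.rpow_lt_one (by norm_num) (by norm_num) (sub_pos.2 hbγ)) fun k => ?_
  set x : ℝ := (2 : ℝ)⁻¹ ^ k
  have hx : 0 < x := by positivity
  have hxγ : x ^ (-b) * (4 * x) ^ γ = 4 ^ γ * ((2 : ℝ)⁻¹ ^ (γ - b)) ^ k := by
    rw [Real.mul_rpow (by norm_num) hx.le, Real.rpow_pow_comm (by norm_num), mul_left_comm,
      ← Real.rpow_add hx, neg_add_eq_sub]
  calc ∫⁻ z in dyadicShell ζ k, ENNReal.ofReal (g z * dNI ζ z ^ (-b)) ∂V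
      ≤ ∫⁻ z in dyadicShell ζ k,
          ENNReal.ofReal (2 ^ |b| * x ^ (-b)) * ENNReal.ofReal (g z) ∂V := by
        refine setLIntegral_mono (hg.ennreal_ofReal.const_mul _) fun z hz => ?_
        rw [← ENNReal.ofReal_mul (by positivity), mul_comm]
        exact ENNReal.ofReal_le_ofReal <|
          mul_le_mul_of_nonneg_right (rpow_neg_le_of_mem_Ioc b hx hz.2) (hg₀ z)
    _ = ENNReal.ofReal (2 ^ |b| * x ^ (-b)) * ∫⁻ z in dyadicShell ζ k, ENNReal.ofReal (g z) ∂V :=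
        lintegral_const_mul _ hg.ennreal_ofReal
    _ ≤ ENNReal.ofReal (2 ^ |b| * x ^ (-b)) * ENNReal.ofReal (C * (4 * x) ^ γ) := by
        gcongr
        exact (lintegral_mono_set (dyadicShell_subset_dNIBall ζ k)).trans (hW _ (by positivity))
    _ = ENNReal.ofReal (2 ^ |b| * C * 4 ^ γ * ((2 : ℝ)⁻¹ ^ (γ - b)) ^ k) := by
        rw [← ENNReal.ofReal_mul (by positivity)]
        congr 1
        linear_combination (2 ^ |b| * C) * hxγ

variable [BorelSpace (EuclideanSpace ℂ (Fin n))] [V.IsAddHaarMeasure]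

lemma measure_dNIBall_le {ζ : EuclideanSpace ℂ (Fin n)} (hζ : ‖ζ‖ = 1) {R : ℝ} (hR : 0 ≤ R) :
    V (dNIBall ζ R) ≤ ENNReal.ofReal ((2 * R) ^ n) * V (ball 0 1) := by
  have hdim : Module.finrank ℝ (EuclideanSpace ℂ (Fin n)) = 2 * n := by
    rw [← Module.finrank_mul_finrank ℝ ℂ, finrank_euclideanSpace, Complex.finrank_real_complex,
      Fintype.card_fin]
  calc V (dNIBall ζ R) ≤ V (closedBall ζ (√(2 * R))) :=
        measure_mono (dNIBall_subset_closedBall hζ hR)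
    _ = ENNReal.ofReal ((2 * R) ^ n) * V (ball 0 1) := by
        rw [Measure.addHaar_closedBall V ζ (Real.sqrt_nonneg _), hdim, pow_mul,
          Real.sq_sqrt (by positivity)]

lemma setLIntegral_dE_rpow_le {E : Set (EuclideanSpace ℂ (Fin n))} {ζ : EuclideanSpace ℂ (Fin n)}
    (hζE : ζ ∈ E) (hζ : ‖ζ‖ = 1) {a : ℝ} (ha : 0 ≤ a) {R : ℝ} (hR : 0 < R) :
    ∫⁻ z in dNIBall ζ R, ENNReal.ofReal (dE E z ^ a) ∂V ≤
      ENNReal.ofReal (2 ^ n * (V (ball 0 1)).toReal * R ^ (a + n)) := by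
  have hball : V (ball 0 1) = ENNReal.ofReal (V (ball 0 1)).toReal :=
    (ENNReal.ofReal_toReal measure_ball_lt_top.ne).symm
  calc ∫⁻ z in dNIBall ζ R, ENNReal.ofReal (dE E z ^ a) ∂V
      ≤ ∫⁻ _ in dNIBall ζ R, ENNReal.ofReal (R ^ a) ∂V :=
        setLIntegral_mono measurable_const fun z hz => ENNReal.ofReal_le_ofReal <|
          Real.rpow_le_rpow (dE_nonneg E z) ((dE_le_dNI hζE z).trans hz.2.le) ha
    _ = ENNReal.ofReal (R ^ a) * V (dNIBall ζ R) := setLIntegral_const _ _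
    _ ≤ ENNReal.ofReal (R ^ a) * (ENNReal.ofReal ((2 * R) ^ n) * V (ball 0 1)) := by
        gcongr; exact measure_dNIBall_le V hζ hR.le
    _ = ENNReal.ofReal (2 ^ n * (V (ball 0 1)).toReal * R ^ (a + n)) := by
        conv_lhs => rw [hball]
        rw [← ENNReal.ofReal_mul (by positivity), ← ENNReal.ofReal_mul (by positivity),
          Real.rpow_add_natCast hR.ne', mul_pow]
        congr 1
        ring

end Shells

lemma integral_le_of_lintegral_le {X : Type*} [MeasurableSpace X] {μ : Measure X} {f : X → ℝ}
    (hf₀ : ∀ x, 0 ≤ f x) (hfm : AEStronglyMeasurable f μ) {K : ℝ} (hK : 0 ≤ K)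
    (h : ∫⁻ x, ENNReal.ofReal (f x) ∂μ ≤ ENNReal.ofReal K) : ∫ x, f x ∂μ ≤ K := by
  rw [integral_eq_lintegral_of_nonneg_ae (ae_of_all _ hf₀) hfm]
  exact ENNReal.toReal_le_of_le_ofReal hK h

section NotIntegrable

lemma IsCompact.exists_not_integrableAtFilter_nhds {X : Type*} [TopologicalSpace X]
    [MeasurableSpace X] {μ : Measure X} {f : X → ℝ} {K : Set X} (hK : IsCompact K)
    (hf : ¬ IntegrableOn f K μ) : ∃ x ∈ K, ¬ IntegrableAtFilter f (𝓝 x) μ := by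
  by_contra! h
  exact hf (LocallyIntegrableOn.integrableOn_isCompact
    (fun x hx => (h x hx).filter_mono nhdsWithin_le_nhds) hK)

lemma not_integrableAtFilter_mul_of_pos {X : Type*} [TopologicalSpace X] [MeasurableSpace X]
    [OpensMeasurableSpace X] {μ : Measure X} {g h : X → ℝ} {w : X}
    (hg : ¬ IntegrableAtFilter g (𝓝 w) μ) (hgm : AEStronglyMeasurable g μ)
    (hh : ContinuousAt h w) (hw : 0 < h w) :
    ¬ IntegrableAtFilter (fun z => g z * h z) (𝓝 w) μ := by
  rintro ⟨s, hs, hint⟩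
  obtain ⟨U, hUs, hUo, hwU⟩ :=
    mem_nhds_iff.1 (inter_mem hs (hh.eventually (lt_mem_nhds (half_lt_self hw))))
  refine hg ⟨U, hUo.mem_nhds hwU, Integrable.mono' ((hint.mono_set
    (hUs.trans inter_subset_left)).norm.const_mul (2 / h w)) hgm.restrict
    (ae_restrict_of_forall_mem hUo.measurableSet fun z hz => ?_)⟩
  have hhz : h w / 2 < h z := (hUs hz).2
  have hhz₀ : 0 < h z := by linarith
  rw [norm_mul, Real.norm_of_nonneg hhz₀.le]
  calc ‖g z‖ = 2 / h w * (‖g z‖ * (h w / 2)) := by field_simp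
    _ ≤ 2 / h w * (‖g z‖ * h z) := by gcongr

variable [MeasurableSpace (EuclideanSpace ℂ (Fin n))] [BorelSpace (EuclideanSpace ℂ (Fin n))]
  (V : Measure (EuclideanSpace ℂ (Fin n)))

lemma exists_forall_integral_mul_dNI_rpow_eq_zero {g : EuclideanSpace ℂ (Fin n) → ℝ}
    (hgm : AEStronglyMeasurable g V) (hg : ¬ IntegrableOn g (ball 0 1) V) (b : ℝ) :
    ∃ w, ∀ ζ, ‖ζ‖ = 1 → ζ ≠ w → ∫ z in ball 0 1, g z * dNI ζ z ^ (-b) ∂V = 0 := by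
  have hg' : ¬ IntegrableOn g (closedBall 0 1) (V.restrict (ball 0 1)) := by
    rwa [IntegrableOn, Measure.restrict_restrict measurableSet_closedBall,
      inter_eq_right.2 ball_subset_closedBall]
  obtain ⟨w, hw, hwg⟩ := (isCompact_closedBall 0 1).exists_not_integrableAtFilter_nhds hg'
  refine ⟨w, fun ζ hζ hne => integral_undef fun hint => ?_⟩
  have hpos : 0 < dNI ζ w := dNI_pos hζ (mem_closedBall_zero_iff.1 hw) hne.symm
  exact not_integrableAtFilter_mul_of_pos hwg hgm.restrict
    ((continuous_dNI ζ).continuousAt.rpow_const (Or.inl hpos.ne')) (Real.rpow_pos_of_pos hpos _)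
    (hint.integrableAtFilter _)

end NotIntegrable

theorem cotillas_general (n : ℕ)
    [MeasurableSpace (EuclideanSpace ℂ (Fin n))]
    [BorelSpace (EuclideanSpace ℂ (Fin n))]
    (E : Set (EuclideanSpace ℂ (Fin n)))
    (hES : E ⊆ Metric.sphere 0 1) (hEne : E.Nonempty)
    (V : Measure (EuclideanSpace ℂ (Fin n))) [V.IsAddHaarMeasure]
    (a₀ : ℝ)
    -- condition (h) of the equivalence theorem :
    (hcond : ∀ a' : ℝ, 0 < a' → a' < a₀ → ∃ C > 0,
      ∀ x : EuclideanSpace ℂ (Fin n), ‖x‖ = 1 → ∀ R : ℝ, 0 < R →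
        ∫ z in {z | ‖z‖ < 1 ∧ dNI x z < R}, (dE E z) ^ (-a') ∂V ≤
          C * R ^ ((n : ℝ) + 1 - a'))
    (a b : ℝ)
    (ha : ((n : ℝ) + 1 - a₀) - (n : ℝ) - 1 < a) (hb : b < n)
    (hab : 0 < a - b + (n : ℝ) + 1) :
    ∃ K > 0, ∀ ζ ∈ E,
      ∫ z in Metric.ball (0 : EuclideanSpace ℂ (Fin n)) 1,
          (dE E z) ^ a * (dNI ζ z) ^ (-b) ∂V ≤ K := by
  have hnorm : ∀ ζ ∈ E, ‖ζ‖ = 1 := fun ζ hζ => by simpa using hES hζ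
  have hg : Measurable fun z => dE E z ^ a :=
    (lipschitzWith_dE (hES.trans sphere_subset_closedBall) hEne).continuous.measurable.pow_const a
  have hg₀ : ∀ z, 0 ≤ dE E z ^ a := fun z => Real.rpow_nonneg (dE_nonneg E z) a
  by_cases hint : a < 0 → IntegrableOn (fun z => dE E z ^ a) (ball 0 1) V
  · obtain ⟨C, γ, hC, hbγ, hW⟩ : ∃ C γ : ℝ, 0 ≤ C ∧ b < γ ∧ ∀ ζ ∈ E, ∀ R > 0,
        ∫⁻ z in dNIBall ζ R, ENNReal.ofReal (dE E z ^ a) ∂V ≤ ENNReal.ofReal (C * R ^ γ) := by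
      rcases le_or_gt 0 a with ha_nonneg | ha_neg
      · exact ⟨_, a + n, by positivity, by linarith,
          fun ζ hζ R hR => setLIntegral_dE_rpow_le V hζ (hnorm ζ hζ) ha_nonneg hR⟩
      · obtain ⟨C, hC, hCb⟩ := hcond (-a) (by linarith) (by linarith)
        refine ⟨C, n + 1 + a, hC.le, by linarith, fun ζ hζ R hR => ?_⟩
        have hWB : dNIBall ζ R ⊆ ball 0 1 := fun z hz => mem_ball_zero_iff.2 hz.1
        rw [← ofReal_integral_eq_lintegral_ofReal ((hint ha_neg).mono_set hWB) (ae_of_all _ hg₀)]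
        exact ENNReal.ofReal_le_ofReal (by simpa [dNIBall] using hCb ζ (hnorm ζ hζ) R hR)
    refine ⟨max (2 ^ |b| * C * 4 ^ γ * (1 - (2 : ℝ)⁻¹ ^ (γ - b))⁻¹) 1, by positivity,
      fun ζ hζ => integral_le_of_lintegral_le ?_ ?_ (by positivity) ?_⟩
    · exact fun z => mul_nonneg (hg₀ z) (Real.rpow_nonneg (dNI_nonneg ζ z) _)
    · exact (hg.mul ((continuous_dNI ζ).measurable.pow_const _)).aestronglyMeasurable
    · exact (lintegral_mul_dNI_rpow_le V (hnorm ζ hζ) hg hg₀ hC hbγ (hW ζ hζ)).trans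
        (ENNReal.ofReal_le_ofReal (le_max_left _ _))
  · obtain ⟨-, hint⟩ := Classical.not_imp.1 hint
    obtain ⟨w, hw⟩ := exists_forall_integral_mul_dNI_rpow_eq_zero V hg.aestronglyMeasurable hint b
    refine ⟨|∫ z in ball 0 1, dE E z ^ a * dNI w z ^ (-b) ∂V| + 1, by positivity, fun ζ hζ => ?_⟩
    rcases eq_or_ne ζ w with rfl | hne
    · linarith [le_abs_self (∫ z in ball 0 1, dE E z ^ a * dNI ζ z ^ (-b) ∂V)]
    · rw [hw ζ (hnorm ζ hζ) hne]
      positivity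

theorem cotillas (n : ℕ)
    [MeasurableSpace (EuclideanSpace ℂ (Fin n))]
    [BorelSpace (EuclideanSpace ℂ (Fin n))]
    (E : Set (EuclideanSpace ℂ (Fin n)))
    (hEclosed : IsClosed E) (hES : E ⊆ Metric.sphere 0 1) (hEne : E.Nonempty)
    (V : Measure (EuclideanSpace ℂ (Fin n))) [V.IsAddHaarMeasure]
    (a₀ : ℝ) (ha₀ : 1 < a₀)
    -- condition (h) of the equivalence theorem :
    (hcond : ∀ a' : ℝ, 0 < a' → a' < a₀ → ∃ C > 0,
      ∀ x : EuclideanSpace ℂ (Fin n), ‖x‖ = 1 → ∀ R : ℝ, 0 < R →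
        ∫ z in {z | ‖z‖ < 1 ∧ dNI x z < R}, (dE E z) ^ (-a') ∂V ≤
          C * R ^ ((n : ℝ) + 1 - a'))
    (a b : ℝ)
    (ha : ((n : ℝ) + 1 - a₀) - (n : ℝ) - 1 < a) (hb : b < n)
    (hab : 0 < a - b + (n : ℝ) + 1) :
    ∃ K > 0, ∀ ζ ∈ E,
      ∫ z in Metric.ball (0 : EuclideanSpace ℂ (Fin n)) 1,
          (dE E z) ^ a * (dNI ζ z) ^ (-b) ∂V ≤ K :=
  cotillas_general n E hES hEne V a₀ hcond a b ha hb hab
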